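/- arXiv:1410.4149 — 4 statements merged into one kernel-verified Lean document; each statement's English description precedes it below -/
import Mathlib

section
/- For every positive integer k and residue ℓ mod p with p = 2k^2+2k+1, the set S = {(i,j) ∈ Z^2 : (k+1)i + kj ≡ ℓ (mod p)} is a k-distance dominating set of Z^2: every point of Z^2 has Manhattan distance at most k from some point of S. -/
lemma key_rep (k : ℕ) (m : ℤ) (hm0 : 0 ≤ m) (hm : m ≤ (k : ℤ)^2 + k) :
    ∃ a b : ℤ, ((k : ℤ) + 1) * a + k * b = m ∧ a.natAbs + b.natAbs ≤ k := by
  obtain ⟨m', rfl⟩ : ∃ m' : ℕ, (m' : ℤ) = m := ⟨m.toNat, Int.toNat_of_nonneg hm0⟩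
  have hm' : m' ≤ k ^ 2 + k := by exact_mod_cast hm
  obtain ⟨t, B, htk, ht0, hB0, hBk, hid⟩ :
      ∃ t B : ℤ, t ≤ k ∧ 0 ≤ t ∧ 0 ≤ B ∧ B ≤ k ∧ (k + 1 : ℤ) * t - B = m' := by
    refine ⟨((m' + k) / (k + 1) : ℕ), ((k : ℤ) + 1) * ((m' + k) / (k + 1) : ℕ) - m',
      ?_, by positivity, ?_, ?_, by ring⟩
    · have h3 : (m' + k) / (k + 1) ≤ k := by
        rw [Nat.div_le_iff_le_mul_add_pred (by omega)]
        have hkk : (k + 1) * k = k ^ 2 + k := by ring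
        omega
      exact_mod_cast h3
    · have h2 : m' + k < (k + 1) * ((m' + k) / (k + 1)) + (k + 1) := by
        have hmod := Nat.div_add_mod (m' + k) (k + 1)
        have hlt := Nat.mod_lt (m' + k) (show 0 < k + 1 by omega)
        calc m' + k = (k + 1) * ((m' + k) / (k + 1)) + (m' + k) % (k + 1) := hmod.symm
        _ < (k + 1) * ((m' + k) / (k + 1)) + (k + 1) := Nat.add_lt_add_left hlt _
      have h2' : (m' : ℤ) + k < ((k : ℤ) + 1) * ((m' + k) / (k + 1) : ℕ) + (k + 1) := by
        exact_mod_cast h2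
      linarith
    · have h1 : (k + 1) * ((m' + k) / (k + 1)) ≤ m' + k := Nat.mul_div_le _ _
      have h1' : ((k : ℤ) + 1) * ((m' + k) / (k + 1) : ℕ) ≤ (m' : ℤ) + k := by
        exact_mod_cast h1
      linarith
  rcases le_or_gt (2 * B) ((k : ℤ) + t) with hc | hc
  · refine ⟨t - B, B, by linarith [hid], ?_⟩
    omega
  · refine ⟨t - B + k, B - (k + 1), by linarith [hid], ?_⟩
    omega


theorem stmt_14 (k : ℕ) (hk : 1 ≤ k) (ℓ : ZMod (2 * k ^ 2 + 2 * k + 1))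
    (v : ℤ × ℤ) :
    ∃ w : ℤ × ℤ,
      ((((k : ℤ) + 1) * w.1 + (k : ℤ) * w.2 : ℤ) :
        ZMod (2 * k ^ 2 + 2 * k + 1)) = ℓ ∧
      (v.1 - w.1).natAbs + (v.2 - w.2).natAbs ≤ k := by
  haveI : NeZero (2 * k ^ 2 + 2 * k + 1) := ⟨by omega⟩
  obtain ⟨n, hnp, hnr⟩ :
      ∃ n : ℕ, n < 2 * k ^ 2 + 2 * k + 1 ∧
        ((n : ℤ) : ZMod (2 * k ^ 2 + 2 * k + 1)) =
          ((((k : ℤ) + 1) * v.1 + (k : ℤ) * v.2 : ℤ) :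
            ZMod (2 * k ^ 2 + 2 * k + 1)) - ℓ := by
    refine ⟨(((((k : ℤ) + 1) * v.1 + (k : ℤ) * v.2 : ℤ) :
        ZMod (2 * k ^ 2 + 2 * k + 1)) - ℓ).val, ZMod.val_lt _, ?_⟩
    push_cast
    simp [ZMod.natCast_val, ZMod.cast_id]
  rcases le_or_gt n (k ^ 2 + k) with h | h
  · obtain ⟨a, b, hab, hle⟩ := key_rep k (n : ℤ) (by positivity) (by exact_mod_cast h)
    refine ⟨(v.1 - a, v.2 - b), ?_, by simpa using hle⟩
    have hcast : ((((k : ℤ) + 1) * a + (k : ℤ) * b : ℤ) :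
        ZMod (2 * k ^ 2 + 2 * k + 1)) =
        ((((k : ℤ) + 1) * v.1 + (k : ℤ) * v.2 : ℤ) :
          ZMod (2 * k ^ 2 + 2 * k + 1)) - ℓ := by
      rw [hab]; exact hnr
    have hsplit : ((((k : ℤ) + 1) * (v.1 - a) + (k : ℤ) * (v.2 - b) : ℤ) :
        ZMod (2 * k ^ 2 + 2 * k + 1))
        = ((((k : ℤ) + 1) * v.1 + (k : ℤ) * v.2 : ℤ) :
            ZMod (2 * k ^ 2 + 2 * k + 1))
          - ((((k : ℤ) + 1) * a + (k : ℤ) * b : ℤ) :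
            ZMod (2 * k ^ 2 + 2 * k + 1)) := by
      push_cast; ring
    rw [hsplit, hcast]
    ring
  · have hm0 : (0 : ℤ) ≤ ((2 * k ^ 2 + 2 * k + 1 : ℕ) : ℤ) - n := by
      have h2 : (n : ℤ) < ((2 * k ^ 2 + 2 * k + 1 : ℕ) : ℤ) := by exact_mod_cast hnp
      linarith
    have hm1 : ((2 * k ^ 2 + 2 * k + 1 : ℕ) : ℤ) - n ≤ (k : ℤ)^2 + k := by
      have h2 : (k : ℤ) ^ 2 + k < n := by exact_mod_cast h
      have h3 : ((2 * k ^ 2 + 2 * k + 1 : ℕ) : ℤ) = 2 * (k : ℤ) ^ 2 + 2 * k + 1 := by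
        push_cast; ring
      linarith
    obtain ⟨a, b, hab, hle⟩ := key_rep k (((2 * k ^ 2 + 2 * k + 1 : ℕ) : ℤ) - n) hm0 hm1
    refine ⟨(v.1 + a, v.2 + b), ?_, ?_⟩
    · have hcast : ((((k : ℤ) + 1) * (-a) + (k : ℤ) * (-b) : ℤ) :
          ZMod (2 * k ^ 2 + 2 * k + 1)) =
          ((((k : ℤ) + 1) * v.1 + (k : ℤ) * v.2 : ℤ) :
            ZMod (2 * k ^ 2 + 2 * k + 1)) - ℓ := by
        have he : ((k : ℤ) + 1) * (-a) + (k : ℤ) * (-b)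
            = (n : ℤ) - ((2 * k ^ 2 + 2 * k + 1 : ℕ) : ℤ) := by linarith [hab]
        have hp0 : (((2 * k ^ 2 + 2 * k + 1 : ℕ) : ℤ) :
            ZMod (2 * k ^ 2 + 2 * k + 1)) = 0 := by
          rw [Int.cast_natCast, ZMod.natCast_self]
        rw [he, Int.cast_sub, hp0, sub_zero, hnr]
      have hsplit : ((((k : ℤ) + 1) * (v.1 + a) + (k : ℤ) * (v.2 + b) : ℤ) :
          ZMod (2 * k ^ 2 + 2 * k + 1))
          = ((((k : ℤ) + 1) * v.1 + (k : ℤ) * v.2 : ℤ) :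
              ZMod (2 * k ^ 2 + 2 * k + 1))
            - ((((k : ℤ) + 1) * (-a) + (k : ℤ) * (-b) : ℤ) :
              ZMod (2 * k ^ 2 + 2 * k + 1)) := by
        push_cast; ring
      rw [hsplit, hcast]
      ring
    · have e1 : v.1 - (v.1 + a) = -a := by ring
      have e2 : v.2 - (v.2 + b) = -b := by ring
      simp only [e1, e2, Int.natAbs_neg]
      exact hle
end

section
/- For every positive integer k and residue ℓ mod p with p = 2k^2+2k+1, the set S = {(i,j) ∈ Z^2 : (k+1)i + kj ≡ ℓ (mod p)} is a perfect k-distance dominating set: every point of Z^2 has Manhattan distance at most k from exactly one point of S. -/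
-- existence over ℤ for nonnegative r
lemma ball_exists_nonneg (k : ℕ) (hk : 1 ≤ k) (r : ℤ) (h0 : 0 ≤ r)
    (hr : r ≤ (k:ℤ)^2 + k) :
    ∃ x y : ℤ, ((k:ℤ)+1) * x + (k:ℤ) * y = r ∧ x.natAbs + y.natAbs ≤ k := by
  have hkpos : (0:ℤ) < k := by exact_mod_cast hk
  set x₀ := r % (k:ℤ) with hx₀def
  set q₀ := r / (k:ℤ) with hq₀def
  have hx₀ : 0 ≤ x₀ := Int.emod_nonneg r (by positivity)
  have hx₀' : x₀ < k := Int.emod_lt_of_pos r hkpos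
  have hrq : (k:ℤ) * q₀ + x₀ = r := Int.mul_ediv_add_emod r k
  have hq0 : 0 ≤ q₀ := Int.ediv_nonneg h0 (le_of_lt hkpos)
  have hqk : q₀ ≤ (k:ℤ) + 1 := by nlinarith
  rcases eq_or_lt_of_le hqk with hq1 | hq1
  · -- q₀ = k+1, forces x₀ = 0, point (k, 0)
    have hx0 : x₀ = 0 := by nlinarith
    refine ⟨(k:ℤ), 0, ?_, ?_⟩
    · linear_combination hrq - hx0 - (k:ℤ) * hq1
    · simp
  · have hqk' : q₀ ≤ (k:ℤ) := by omega
    rcases le_or_gt (2 * x₀ - k) q₀ with hcase | hcase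
    · refine ⟨x₀, q₀ - x₀, ?_, ?_⟩
      · linear_combination hrq
      · omega
    · refine ⟨x₀ - k, q₀ + (k + 1) - x₀, ?_, ?_⟩
      · linear_combination hrq
      · omega

lemma ball_exists_int (k : ℕ) (hk : 1 ≤ k) (r : ℤ) (hr : |r| ≤ (k:ℤ)^2 + k) :
    ∃ x y : ℤ, ((k:ℤ)+1) * x + (k:ℤ) * y = r ∧ x.natAbs + y.natAbs ≤ k := by
  rcases le_or_gt 0 r with h0 | h0
  · exact ball_exists_nonneg k hk r h0 (by rwa [abs_of_nonneg h0] at hr)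
  · obtain ⟨x, y, hxy, hn⟩ := ball_exists_nonneg k hk (-r) (by omega)
      (by rw [abs_of_neg h0] at hr; omega)
    exact ⟨-x, -y, by linear_combination -hxy, by omega⟩

lemma ball_uniq (k : ℕ) (hk : 1 ≤ k) (a b : ℤ)
    (h : ((((k:ℤ)+1) * a + (k:ℤ) * b : ℤ) : ZMod (2 * k ^ 2 + 2 * k + 1)) = 0)
    (hn : a.natAbs + b.natAbs ≤ 2 * k) : a = 0 ∧ b = 0 := by
  have hdvd : ((2 * k ^ 2 + 2 * k + 1 : ℕ) : ℤ) ∣ ((k:ℤ)+1) * a + (k:ℤ) * b :=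
    (ZMod.intCast_zmod_eq_zero_iff_dvd _ _).mp h
  obtain ⟨m, hm⟩ := hdvd
  have hA : (a.natAbs : ℤ) = |a| := Int.abs_eq_natAbs a |>.symm
  have hB : (b.natAbs : ℤ) = |b| := Int.abs_eq_natAbs b |>.symm
  have hn' : |a| + |b| ≤ 2 * (k:ℤ) := by
    rw [← hA, ← hB]; exact_mod_cast hn
  have hpcast : ((2 * k ^ 2 + 2 * k + 1 : ℕ) : ℤ) = 2 * (k:ℤ)^2 + 2 * k + 1 := by
    push_cast; ring
  rw [hpcast] at hm
  have habs : |((k:ℤ)+1) * a + (k:ℤ) * b| ≤ 2 * (k:ℤ)^2 + 2 * k := by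
    calc |((k:ℤ)+1) * a + (k:ℤ) * b| ≤ ((k:ℤ)+1) * |a| + k * |b| := by
          refine (abs_add_le _ _).trans ?_
          rw [abs_mul, abs_mul]
          have : |(k:ℤ)+1| = (k:ℤ)+1 := abs_of_nonneg (by positivity)
          have h2 : |(k:ℤ)| = (k:ℤ) := abs_of_nonneg (by positivity)
          rw [this, h2]
      _ ≤ 2 * (k:ℤ)^2 + 2 * k := by nlinarith [abs_nonneg a, abs_nonneg b]
  have hm0 : m = 0 := by
    rcases lt_trichotomy m 0 with hmlt | hme | hmgt
    · have : (2 * (k:ℤ)^2 + 2 * k + 1) * m ≤ -(2 * (k:ℤ)^2 + 2 * k + 1) := by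
        nlinarith
      rw [← hm] at this
      have := abs_le.mp habs
      nlinarith
    · exact hme
    · have : (2 * (k:ℤ)^2 + 2 * k + 1) ≤ (2 * (k:ℤ)^2 + 2 * k + 1) * m := by
        nlinarith
      rw [← hm] at this
      have := abs_le.mp habs
      nlinarith
  rw [hm0, mul_zero] at hm
  -- now exact equation
  set t := a + b with ht
  have ha : a = -(k:ℤ) * t := by linear_combination hm
  have hb : b = ((k:ℤ)+1) * t := by linear_combination -hm
  have htabs : (2 * (k:ℤ) + 1) * |t| ≤ 2 * k := by
    have h1 : |a| = (k:ℤ) * |t| := by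
      rw [ha, abs_mul, abs_neg, abs_of_nonneg (by positivity : (0:ℤ) ≤ (k:ℤ))]
    have h2 : |b| = ((k:ℤ)+1) * |t| := by
      rw [hb, abs_mul, abs_of_nonneg (by positivity : (0:ℤ) ≤ (k:ℤ)+1)]
    nlinarith
  have ht0 : t = 0 := by
    rcases eq_or_ne t 0 with h | h
    · exact h
    · have : 1 ≤ |t| := Int.one_le_abs (by omega)
      nlinarith [abs_nonneg t]
  constructor
  · rw [ha, ht0, mul_zero]
  · rw [hb, ht0, mul_zero]

theorem stmt_15 (k : ℕ) (hk : 1 ≤ k) (ℓ : ZMod (2 * k ^ 2 + 2 * k + 1))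
    (v : ℤ × ℤ) :
    ∃! w : ℤ × ℤ,
      ((((k : ℤ) + 1) * w.1 + (k : ℤ) * w.2 : ℤ) :
        ZMod (2 * k ^ 2 + 2 * k + 1)) = ℓ ∧
      (v.1 - w.1).natAbs + (v.2 - w.2).natAbs ≤ k := by
  haveI : NeZero (2 * k ^ 2 + 2 * k + 1) := ⟨by positivity⟩
  set c : ZMod (2 * k ^ 2 + 2 * k + 1) :=
    ℓ - ((((k : ℤ) + 1) * v.1 + (k : ℤ) * v.2 : ℤ) : ZMod (2 * k ^ 2 + 2 * k + 1)) with hc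
  set N : ℕ := k ^ 2 + k with hN
  set r : ℤ := ((c + (N : ZMod (2 * k ^ 2 + 2 * k + 1))).val : ℤ) - N with hr
  have hval : (c + (N : ZMod (2 * k ^ 2 + 2 * k + 1))).val < 2 * N + 1 :=
    lt_of_lt_of_eq (ZMod.val_lt _) (by rw [hN]; ring)
  have hrabs : |r| ≤ (k:ℤ)^2 + k := by
    have h1 : ((c + (N : ZMod (2 * k ^ 2 + 2 * k + 1))).val : ℤ) < 2 * N + 1 := by
      exact_mod_cast hval
    have h2 : (0:ℤ) ≤ ((c + (N : ZMod (2 * k ^ 2 + 2 * k + 1))).val : ℤ) := by positivity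
    have h3 : |r| ≤ (N:ℤ) := by rw [hr, abs_le]; omega
    calc |r| ≤ (N:ℤ) := h3
      _ = (k:ℤ)^2 + k := by rw [hN]; push_cast; ring
  have hrc : ((r : ℤ) : ZMod (2 * k ^ 2 + 2 * k + 1)) = c := by
    rw [hr]
    push_cast
    rw [ZMod.natCast_val, ZMod.cast_id]
    ring
  obtain ⟨x, y, hxy, hnorm⟩ := ball_exists_int k hk r hrabs
  have hxyc : ((((k:ℤ)+1) * x + (k:ℤ) * y : ℤ) : ZMod (2 * k ^ 2 + 2 * k + 1)) = c := by
    rw [← hrc, hxy]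
  rw [hc] at hxyc
  push_cast at hxyc
  have hfirst : ((((k : ℤ) + 1) * (v.1 + x) + (k : ℤ) * (v.2 + y) : ℤ) :
      ZMod (2 * k ^ 2 + 2 * k + 1)) = ℓ := by
    push_cast
    linear_combination hxyc
  refine ⟨(v.1 + x, v.2 + y), ⟨hfirst, ?_⟩, ?_⟩
  · simp only
    omega
  · rintro ⟨w1, w2⟩ ⟨h1', h2'⟩
    have hzero : ((((k:ℤ)+1) * (w1 - (v.1 + x)) + (k:ℤ) * (w2 - (v.2 + y)) : ℤ) :
        ZMod (2 * k ^ 2 + 2 * k + 1)) = 0 := by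
      push_cast
      push_cast at h1' hfirst
      linear_combination h1' - hfirst
    have h2k : (w1 - (v.1 + x)).natAbs + (w2 - (v.2 + y)).natAbs ≤ 2 * k := by
      simp only at h2'
      omega
    obtain ⟨ha, hb⟩ := ball_uniq k hk _ _ hzero h2k
    have e1 : w1 = v.1 + x := by omega
    have e2 : w2 = v.2 + y := by omega
    simp [e1, e2]
end

section
/- For positive integers k, m, n, the k-distance domination number of the m × n grid graph satisfies γ_k(G_{m,n}) ≤ ⌊(m+2k)(n+2k)/(2k^2+2k+1)⌋. -/
lemma diamond_surj (K s : ℤ) (hK : 1 ≤ K) (h0 : 0 ≤ s) (h1 : s < 2*K^2+2*K+1) :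
    ∃ dx dy : ℤ, (dx.natAbs + dy.natAbs : ℤ) ≤ K ∧
      (dx + (2*K+1)*dy = s ∨ dx + (2*K+1)*dy = s - (2*K^2+2*K+1)) := by
  have h2K : (0:ℤ) < 2*K+1 := by linarith
  set dy := (s+K) / (2*K+1) with hdy
  set dx := s - (2*K+1)*dy with hdx
  have hval : dx + (2*K+1)*dy = s := by rw [hdx]; ring
  have hmod : dx + K = (s+K) % (2*K+1) := by
    rw [Int.emod_def, ← hdy, hdx]; ring
  have hr0 : 0 ≤ (s+K) % (2*K+1) := Int.emod_nonneg _ (by linarith)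
  have hr1 : (s+K) % (2*K+1) < 2*K+1 := Int.emod_lt_of_pos _ h2K
  have hx0 : -K ≤ dx := by linarith
  have hx1 : dx ≤ K := by linarith
  have hy0 : 0 ≤ dy := Int.ediv_nonneg (by linarith) (by linarith)
  have hy1 : dy ≤ K := by
    have h2 : s + K < (K+1) * (2*K+1) := by nlinarith
    have := (Int.ediv_lt_iff_lt_mul h2K).mpr h2
    rw [← hdy] at this; linarith
  by_cases hc : (dx.natAbs + dy.natAbs : ℤ) ≤ K
  · exact ⟨dx, dy, hc, Or.inl hval⟩
  · push_neg at hc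
    by_cases hp : 0 < dx
    · exact ⟨dx - (K+1), dy - K, by omega, Or.inr (by linarith [hval])⟩
    · exact ⟨dx + K, dy - (K+1), by omega, Or.inr (by nlinarith [hval])⟩

theorem stmt_17 (k m n : ℕ) (hk : 0 < k) (hm : 0 < m) (hn : 0 < n) :
    ∃ S : Finset (ℤ × ℤ),
      S ⊆ (Finset.Ico (0 : ℤ) m) ×ˢ (Finset.Ico (0 : ℤ) n) ∧
      (∀ v ∈ (Finset.Ico (0 : ℤ) m) ×ˢ (Finset.Ico (0 : ℤ) n),
        ∃ w ∈ S, (v.1 - w.1).natAbs + (v.2 - w.2).natAbs ≤ k) ∧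
      S.card ≤ (m + 2 * k) * (n + 2 * k) / (2 * k ^ 2 + 2 * k + 1) := by
  set d : ℕ := 2 * k ^ 2 + 2 * k + 1 with hd
  have hd0 : 0 < d := by positivity
  have hdZ : (0:ℤ) < (d:ℤ) := by exact_mod_cast hd0
  set f : ℤ × ℤ → ℤ := fun p => (p.1 + (2*k+1)*p.2) % (d:ℤ) with hf
  set Box : Finset (ℤ × ℤ) :=
    (Finset.Ico (-(k:ℤ)) ((m:ℤ)+k)) ×ˢ (Finset.Ico (-(k:ℤ)) ((n:ℤ)+k)) with hBox
  have hBoxcard : Box.card = (m + 2*k) * (n + 2*k) := by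
    rw [hBox, Finset.card_product, Int.card_Ico, Int.card_Ico]
    have h1 : ((m:ℤ)+k - -(k:ℤ)).toNat = m + 2*k := by omega
    have h2 : ((n:ℤ)+k - -(k:ℤ)).toNat = n + 2*k := by omega
    rw [h1, h2]
  set T : Finset ℤ := Finset.Ico (0:ℤ) (d:ℤ) with hT
  have hTcard : T.card = d := by rw [hT, Int.card_Ico]; omega
  have hmemT : ∀ p ∈ Box, f p ∈ T := by
    intro p _
    rw [hT, Finset.mem_Ico]
    exact ⟨Int.emod_nonneg _ (by omega), Int.emod_lt_of_pos _ hdZ⟩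
  -- pigeonhole
  obtain ⟨t, htT, htcard⟩ : ∃ t ∈ T,
      (Box.filter (fun p => f p = t)).card ≤ (m + 2*k) * (n + 2*k) / d := by
    by_contra hcon
    push_neg at hcon
    have hsum : ∑ u ∈ T, (Box.filter (fun p => f p = u)).card = Box.card :=
      (Finset.card_eq_sum_card_fiberwise hmemT).symm
    have hge : T.card • ((m + 2*k) * (n + 2*k) / d + 1) ≤
        ∑ u ∈ T, (Box.filter (fun p => f p = u)).card :=
      Finset.card_nsmul_le_sum T _ _ (fun u hu => hcon u hu)
    rw [hsum, hBoxcard, hTcard, smul_eq_mul] at hge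
    have : (m + 2*k) * (n + 2*k) < d * ((m + 2*k) * (n + 2*k) / d + 1) := by
      have := Nat.div_add_mod ((m + 2*k) * (n + 2*k)) d
      have := Nat.mod_lt ((m + 2*k) * (n + 2*k)) hd0
      nlinarith
    omega
  have ht0 : 0 ≤ t := (Finset.mem_Ico.mp htT).1
  have ht1 : t < (d:ℤ) := (Finset.mem_Ico.mp htT).2
  -- the dominating set
  set clamp : ℤ × ℤ → ℤ × ℤ :=
    fun p => (max 0 (min p.1 ((m:ℤ)-1)), max 0 (min p.2 ((n:ℤ)-1))) with hclamp
  refine ⟨(Box.filter (fun p => f p = t)).image clamp, ?_, ?_, ?_⟩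
  · intro w hw
    simp only [Finset.mem_image] at hw
    obtain ⟨p, _, rfl⟩ := hw
    simp only [hclamp, Finset.mem_product, Finset.mem_Ico]
    constructor <;> constructor <;> omega
  · intro v hv
    simp only [Finset.mem_product, Finset.mem_Ico] at hv
    obtain ⟨⟨hv1, hv2⟩, hv3, hv4⟩ := hv
    set s : ℤ := (t - (v.1 + (2*k+1)*v.2)) % (d:ℤ) with hs
    have hs0 : 0 ≤ s := Int.emod_nonneg _ (by omega)
    have hs1 : s < (d:ℤ) := Int.emod_lt_of_pos _ hdZ
    have hdcast : (d:ℤ) = 2*(k:ℤ)^2 + 2*k + 1 := by push_cast [hd]; ring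
    obtain ⟨dx, dy, habs, hcase⟩ := diamond_surj (k:ℤ) s (by exact_mod_cast hk)
      hs0 (by rw [← hdcast]; exact hs1)
    have hcenter : f (v.1 + dx, v.2 + dy) = t := by
      have key : (v.1 + dx + (2*k+1)*(v.2 + dy)) % (d:ℤ) = t := by
        have hA : v.1 + dx + (2*(k:ℤ)+1)*(v.2 + dy)
            = (v.1 + (2*k+1)*v.2) + (dx + (2*(k:ℤ)+1)*dy) := by ring
        rcases hcase with h | h
        · rw [hA, h, hs, Int.add_emod_emod]
          have : v.1 + (2*(k:ℤ)+1)*v.2 + (t - (v.1 + (2*(k:ℤ)+1)*v.2)) = t := by ring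
          rw [this]
          exact Int.emod_eq_of_lt ht0 ht1
        · rw [hA, h, ← hdcast]
          have : v.1 + (2*(k:ℤ)+1)*v.2 + (s - (d:ℤ))
              = (v.1 + (2*(k:ℤ)+1)*v.2 + s) + (d:ℤ) * (-1) := by ring
          rw [this, Int.add_mul_emod_self_left, hs, Int.add_emod_emod]
          have : v.1 + (2*(k:ℤ)+1)*v.2 + (t - (v.1 + (2*(k:ℤ)+1)*v.2)) = t := by ring
          rw [this]
          exact Int.emod_eq_of_lt ht0 ht1
      simpa [hf] using key
    have hcBox : (v.1 + dx, v.2 + dy) ∈ Box := by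
      simp only [hBox, Finset.mem_product, Finset.mem_Ico]
      omega
    refine ⟨clamp (v.1 + dx, v.2 + dy), Finset.mem_image_of_mem _
      (Finset.mem_filter.mpr ⟨hcBox, hcenter⟩), ?_⟩
    simp only [hclamp, max_def, min_def]
    split_ifs <;> omega
  · calc ((Box.filter (fun p => f p = t)).image clamp).card
        ≤ (Box.filter (fun p => f p = t)).card := Finset.card_image_le
      _ ≤ (m + 2*k) * (n + 2*k) / d := htcard
      _ ≤ (m + 2 * k) * (n + 2 * k) / (2 * k ^ 2 + 2 * k + 1) := le_of_eq (by rw [hd])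
end

section
/- For any positive integer k and any two distinct points (i,j), (i',j') of Z^2 with (k+1)i + kj ≡ (k+1)i' + kj' (mod 2k^2+2k+1), the Manhattan distance between (i,j) and (i',j') is at least 2k+1. -/
/-! Put `a = i - i'`, `b = j - j'` and `p = 2k² + 2k + 1`, so that `p ∣ (k+1)a + kb`.
If `|a| + |b| ≤ 2k`, then `|(k+1)a + kb| ≤ (k+1)·2k < p`, so `(k+1)a + kb = 0`.
Writing `s = a + b` this says `a = -ks` and `b = (k+1)s`, whence `|a| + |b| = (2k+1)|s|`,
which is at least `2k + 1` as soon as `(a, b) ≠ 0`. -/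

namespace ManhattanCode

variable {k a b : ℤ}

lemma abs_linearForm_lt (hk : 0 ≤ k) (hab : |a| + |b| ≤ 2 * k) :
    |(k + 1) * a + k * b| < 2 * k ^ 2 + 2 * k + 1 :=
  calc |(k + 1) * a + k * b| ≤ (k + 1) * |a| + k * |b| := by
        refine (abs_add_le _ _).trans_eq ?_
        rw [abs_mul, abs_mul, abs_of_nonneg hk, abs_of_nonneg (by omega : 0 ≤ k + 1)]
    _ ≤ (k + 1) * (2 * k) := by nlinarith [abs_nonneg a, abs_nonneg b]
    _ < 2 * k ^ 2 + 2 * k + 1 := by nlinarith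

lemma abs_add_abs_of_linearForm_eq_zero (hk : 0 ≤ k) (h : (k + 1) * a + k * b = 0) :
    |a| + |b| = (2 * k + 1) * |a + b| := by
  have ha : a = -k * (a + b) := by linear_combination h
  have hb : b = (k + 1) * (a + b) := by linear_combination -h
  calc |a| + |b| = |-k * (a + b)| + |(k + 1) * (a + b)| := by rw [← ha, ← hb]
    _ = (2 * k + 1) * |a + b| := by
      rw [abs_mul, abs_mul, abs_neg, abs_of_nonneg hk, abs_of_nonneg (by omega : 0 ≤ k + 1)]
      ring

lemma le_abs_add_abs_of_dvd (hk : 0 ≤ k) (hab : a ≠ 0 ∨ b ≠ 0)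
    (hdvd : 2 * k ^ 2 + 2 * k + 1 ∣ (k + 1) * a + k * b) :
    2 * k + 1 ≤ |a| + |b| := by
  by_contra! hlt
  have hzero : (k + 1) * a + k * b = 0 :=
    Int.eq_zero_of_abs_lt_dvd hdvd (abs_linearForm_lt hk (by omega))
  have hsum : a + b ≠ 0 := by
    intro hs
    have : a = 0 := by linear_combination hzero - k * hs
    omega
  have := abs_add_abs_of_linearForm_eq_zero hk hzero
  nlinarith [Int.one_le_abs hsum]

end ManhattanCode

open ManhattanCode in
theorem stmt_19_general (k : ℕ) (v w : ℤ × ℤ) (hne : v ≠ w)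
    (h : ((((k : ℤ) + 1) * v.1 + (k : ℤ) * v.2 : ℤ) :
        ZMod (2 * k ^ 2 + 2 * k + 1))
      = ((((k : ℤ) + 1) * w.1 + (k : ℤ) * w.2 : ℤ) :
        ZMod (2 * k ^ 2 + 2 * k + 1))) :
    2 * k + 1 ≤ (v.1 - w.1).natAbs + (v.2 - w.2).natAbs := by
  have hdvd : 2 * (k : ℤ) ^ 2 + 2 * k + 1 ∣ (k + 1) * (v.1 - w.1) + k * (v.2 - w.2) := by
    have := ((ZMod.intCast_eq_intCast_iff_dvd_sub _ _ _).mp h.symm)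
    push_cast at this
    convert this using 1
    ring
  have hab : v.1 - w.1 ≠ 0 ∨ v.2 - w.2 ≠ 0 := by
    by_contra! h0
    exact hne (Prod.ext (by omega) (by omega))
  have := le_abs_add_abs_of_dvd (Int.natCast_nonneg k) hab hdvd
  zify
  simpa only [Int.natCast_natAbs] using this

theorem stmt_19 (k : ℕ) (hk : 1 ≤ k) (v w : ℤ × ℤ) (hne : v ≠ w)
    (h : ((((k : ℤ) + 1) * v.1 + (k : ℤ) * v.2 : ℤ) :
        ZMod (2 * k ^ 2 + 2 * k + 1))
      = ((((k : ℤ) + 1) * w.1 + (k : ℤ) * w.2 : ℤ) :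
        ZMod (2 * k ^ 2 + 2 * k + 1))) :
    2 * k + 1 ≤ (v.1 - w.1).natAbs + (v.2 - w.2).natAbs :=
  stmt_19_general k v w hne h
end
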